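/- arXiv:math/0008177 — 3 statements merged into one kernel-verified Lean document; each statement's English description precedes it below -/
import Mathlib

section
/- For every integer n ≥ 3, exp(H_n)·log(H_n) ≥ e^γ · n · log(log n). -/
/-!
Since `γ < H_n - log n` for every `n ≥ 1`, we get `e^γ n ≤ e^{H_n}`, and `log n ≤ H_n` gives
`log (log n) ≤ log H_n`. Multiplying the two bounds proves the inequality whenever
`log (log n) ≥ 0`; otherwise its left side is negative while its right side is not.
-/

open Real

theorem harmonic_mono : Monotone harmonic :=
  monotone_nat_of_le_succ fun n => by
    rw [harmonic_succ]
    exact le_add_of_nonneg_right (by positivity)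

theorem one_le_harmonic {n : ℕ} (hn : n ≠ 0) : 1 ≤ harmonic n := by
  simpa using harmonic_mono (Nat.one_le_iff_ne_zero.mpr hn)

theorem log_harmonic_nonneg (n : ℕ) : 0 ≤ log (harmonic n) := by
  rcases eq_or_ne n 0 with rfl | hn
  · simp
  · exact log_nonneg (mod_cast one_le_harmonic hn)

theorem log_le_harmonic (n : ℕ) : log n ≤ harmonic n := by
  rcases eq_or_ne n 0 with rfl | hn
  · simp
  · calc log n ≤ log ↑(n + 1) := log_le_log (by positivity) (by simp)
      _ ≤ harmonic n := log_add_one_le_harmonic n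

theorem eulerMascheroniConstant_add_log_lt_harmonic {n : ℕ} (hn : n ≠ 0) :
    eulerMascheroniConstant + log n < harmonic n := by
  have h := eulerMascheroniConstant_lt_eulerMascheroniSeq' n
  rw [eulerMascheroniSeq', if_neg hn] at h
  linarith

theorem exp_eulerMascheroniConstant_mul_le_exp_harmonic (n : ℕ) :
    exp eulerMascheroniConstant * n ≤ exp (harmonic n) := by
  rcases eq_or_ne n 0 with rfl | hn
  · simp
  · rw [← exp_log (show (0 : ℝ) < n by positivity), ← exp_add]
    exact exp_le_exp.mpr (eulerMascheroniConstant_add_log_lt_harmonic hn).le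

theorem exp_harmonic_mul_log_harmonic_ge_general (n : ℕ) :
    exp eulerMascheroniConstant * n * log (log n) ≤
      exp (harmonic n) * log (harmonic n) := by
  have rhs_nonneg : 0 ≤ exp (harmonic n) * log (harmonic n) :=
    mul_nonneg (exp_nonneg _) (log_harmonic_nonneg n)
  rcases le_or_gt (log (log n)) 0 with hloglog | hloglog
  · exact (mul_nonpos_of_nonneg_of_nonpos (by positivity) hloglog).trans rhs_nonneg
  · have hlog : 0 < log n :=
      (log_natCast_nonneg n).lt_of_ne fun h => hloglog.ne' (by rw [← h, log_zero])
    exact mul_le_mul (exp_eulerMascheroniConstant_mul_le_exp_harmonic n)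
      (log_le_log hlog (log_le_harmonic n)) hloglog.le (exp_nonneg _)

/-- For every `n ≥ 3`, `exp(H_n) * log(H_n) ≥ e^γ * n * log (log n)`. -/
theorem exp_harmonic_mul_log_harmonic_ge (n : ℕ) (hn : 3 ≤ n) :
    exp eulerMascheroniConstant * n * log (log n) ≤
      exp (harmonic n) * log (harmonic n) :=
  exp_harmonic_mul_log_harmonic_ge_general n
end

section
/- For every integer n ≥ 20, H_n + exp(H_n)·log(H_n) ≤ e^γ · n · log(log n) + 7n/(log n). -/
open Real

/-- Square of the logarithm is at most the argument, for `x ≥ 1`. -/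
lemma sq_log_le_self {x : ℝ} (hx : 1 ≤ x) : (Real.log x) ^ 2 ≤ x := by
  set u := Real.sqrt (Real.sqrt x) with hu
  have hx0 : (0:ℝ) ≤ x := by linarith
  have hu1 : 1 ≤ u := by
    apply Real.one_le_sqrt.mpr
    exact Real.one_le_sqrt.mpr hx
  have hu4 : u ^ 4 = x := by
    have h1 : u ^ 2 = Real.sqrt x := Real.sq_sqrt (Real.sqrt_nonneg x)
    have h2 : (Real.sqrt x) ^ 2 = x := Real.sq_sqrt hx0
    calc u ^ 4 = (u ^ 2) ^ 2 := by ring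
    _ = x := by rw [h1, h2]
  have hlog : Real.log x = 4 * Real.log u := by
    rw [← hu4, Real.log_pow]; norm_num
  have hlu : Real.log u ≤ u - 1 := Real.log_le_sub_one_of_pos (by linarith)
  have h3 : Real.log x ≤ u ^ 2 := by nlinarith [sq_nonneg (u - 2)]
  have h0 : 0 ≤ Real.log x := Real.log_nonneg hx
  calc (Real.log x) ^ 2 ≤ (u ^ 2) ^ 2 := by nlinarith
  _ = x := by rw [← hu4]; ring

set_option maxHeartbeats 1000000 in
/-- For every `n ≥ 20`,
`H_n + exp(H_n) * log(H_n) ≤ e^γ * n * log (log n) + 7n / log n`. -/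
theorem harmonic_add_exp_harmonic_mul_log_harmonic_le (n : ℕ) (hn : 20 ≤ n) :
    (harmonic n : ℝ) + exp (harmonic n) * log (harmonic n) ≤
      exp eulerMascheroniConstant * n * log (log n) + 7 * n / log n := by
  set A : ℝ := ((harmonic n : ℚ) : ℝ) with hA
  set γ : ℝ := eulerMascheroniConstant with hγdef
  have hn20 : (20:ℝ) ≤ (n:ℝ) := by exact_mod_cast hn
  have hn0 : (0:ℝ) < n := by linarith
  set L : ℝ := Real.log n with hLdef
  have hL1 : 1 ≤ L := by
    rw [hLdef, Real.le_log_iff_exp_le hn0]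
    linarith [Real.exp_one_lt_d9]
  have hL0 : 0 < L := by linarith
  have hLsq : L ^ 2 ≤ (n:ℝ) := sq_log_le_self (by linarith)
  -- lower bound on A
  have hA_lb : Real.log ((n:ℝ) + 1) ≤ A := by
    have h := log_add_one_le_harmonic n
    push_cast at h
    exact h
  have hlogn_mono : L ≤ Real.log ((n:ℝ) + 1) := by
    rw [hLdef]
    exact Real.log_le_log hn0 (by linarith)
  have hA1 : 1 ≤ A := by linarith
  -- upper bound on log(n+1)
  have hlogn1 : Real.log ((n:ℝ) + 1) ≤ L + 1 / (n:ℝ) := by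
    have h := Real.log_le_sub_one_of_pos (x := ((n:ℝ) + 1) / n) (by positivity)
    rw [Real.log_div (by linarith) (by linarith)] at h
    have h2 : ((n:ℝ) + 1) / n - 1 = 1 / n := by field_simp; ring
    rw [hLdef]; linarith
  have hinv : (1:ℝ) / n ≤ 1 / 20 := by
    apply one_div_le_one_div_of_le <;> linarith
  -- γ bounds
  have hγ : γ < 2 / 3 := Real.eulerMascheroniConstant_lt_two_thirds
  have hγ0 : 0 < γ := lt_trans (by norm_num) Real.one_half_lt_eulerMascheroniConstant
  -- A < γ + log (n+1)
  have hAγ : A < γ + Real.log ((n:ℝ) + 1) := by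
    have h := Real.eulerMascheroniSeq_lt_eulerMascheroniConstant n
    rw [Real.eulerMascheroniSeq] at h
    push_cast at h
    rw [hA]; push_cast
    linarith
  have hA_ub : A ≤ L + 43 / 60 := by
    have : γ + Real.log ((n:ℝ)+1) ≤ 2/3 + (L + 1/20) := by linarith
    linarith
  -- exp A bound
  have hexpA : Real.exp A ≤ Real.exp γ * ((n:ℝ) + 1) := by
    calc Real.exp A ≤ Real.exp (γ + Real.log ((n:ℝ)+1)) := Real.exp_le_exp.2 (le_of_lt hAγ)
    _ = Real.exp γ * ((n:ℝ)+1) := by rw [Real.exp_add, Real.exp_log (by linarith)]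
  -- exp γ ≤ 3
  have hexpγpos : 0 < Real.exp γ := Real.exp_pos γ
  have hexpγ : Real.exp γ ≤ 3 := by
    have h1 : -γ + 1 ≤ Real.exp (-γ) := Real.add_one_le_exp (-γ)
    have h2 : Real.exp (-γ) = (Real.exp γ)⁻¹ := Real.exp_neg γ
    rw [h2] at h1
    have h3 : (Real.exp γ)⁻¹ * Real.exp γ = 1 := inv_mul_cancel₀ (ne_of_gt hexpγpos)
    nlinarith
  -- log A bound
  have hlogL0 : 0 ≤ Real.log L := Real.log_nonneg hL1
  have hlogL : Real.log L ≤ L - 1 := Real.log_le_sub_one_of_pos hL0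
  have hlogA : Real.log A ≤ Real.log L + (43/60) / L := by
    have h1 : Real.log A ≤ Real.log (L + 43/60) := Real.log_le_log (by linarith) hA_ub
    have h2 := Real.log_le_sub_one_of_pos (x := (L + 43/60) / L) (by positivity)
    rw [Real.log_div (by linarith) (ne_of_gt hL0)] at h2
    have h3 : (L + 43/60) / L - 1 = (43/60) / L := by
      field_simp
      ring
    linarith
  have hlogA0 : 0 ≤ Real.log A := Real.log_nonneg hA1
  -- key product bound
  have key : Real.exp A * Real.log A ≤ Real.exp γ * ((n:ℝ)+1) * (Real.log L + (43/60)/L) := by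
    apply mul_le_mul hexpA hlogA hlogA0 (by positivity)
  -- final arithmetic
  have hA_ub2 : A ≤ 1 + L := by
    have := harmonic_le_one_add_log n
    rw [hA, hLdef]; push_cast at this ⊢; linarith
  have hgoal : A + Real.exp γ * ((n:ℝ)+1) * (Real.log L + (43/60)/L) ≤
      Real.exp γ * n * Real.log L + 7 * n / L := by
    set E := Real.exp γ with hE
    have expand : E * ((n:ℝ)+1) * (Real.log L + (43/60)/L)
        = E * n * Real.log L + E * Real.log L + (43/60) * E * (((n:ℝ)+1) / L) := by
      field_simp
    rw [expand]
    have h1 : E * Real.log L ≤ 3 * (L - 1) := by nlinarith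
    have h2 : (43/60) * E * (((n:ℝ)+1)/L) ≤ (43/20) * (((n:ℝ)+1)/L) := by
      have hpos : 0 ≤ ((n:ℝ)+1)/L := by positivity
      nlinarith
    have h3 : A + 3*(L-1) + (43/20) * (((n:ℝ)+1)/L) ≤ 7 * n / L := by
      have hAL : A * L ≤ (1 + L) * L := mul_le_mul_of_nonneg_right hA_ub2 hL0.le
      have key2 : (A + 3*(L-1)) * L + (43/20) * ((n:ℝ)+1) ≤ 7 * n := by
        nlinarith [hAL, hLsq, hL1, hn20]
      have heq : A + 3*(L-1) + (43/20) * (((n:ℝ)+1)/L)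
          = ((A + 3*(L-1)) * L + (43/20) * ((n:ℝ)+1)) / L := by
        field_simp
      rw [heq]
      exact (div_le_div_iff_of_pos_right hL0).mpr key2
    linarith
  calc A + Real.exp A * Real.log A
      ≤ A + Real.exp γ * ((n:ℝ)+1) * (Real.log L + (43/60)/L) := by linarith
  _ ≤ Real.exp γ * n * Real.log L + 7 * n / L := hgoal
end

section
/- (Bachmann) The partial sums of the sum of divisors function satisfy ∑_{j=1}^n σ(j) = (π²/12)·n² + O(n·log n) as n → ∞; that is, the function n ↦ ∑_{j=1}^n σ(j) − (π²/12)·n² is O(n·log n). -/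
open Real

lemma swap_sum_aux (n : ℕ) :
    ∑ j ∈ Finset.Icc 1 n, ∑ d ∈ j.divisors, d
      = ∑ q ∈ Finset.Icc 1 n, ∑ d ∈ Finset.Icc 1 (n / q), d := by
  have hdisj : (Finset.Icc 1 n : Set ℕ).PairwiseDisjoint Nat.divisorsAntidiagonal := by
    intro a _ b _ hab
    rw [Function.onFun, Finset.disjoint_left]
    intro p hpa hpb
    rw [Nat.mem_divisorsAntidiagonal] at hpa hpb
    exact hab (hpa.1.symm.trans hpb.1)
  calc ∑ j ∈ Finset.Icc 1 n, ∑ d ∈ j.divisors, d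
      = ∑ j ∈ Finset.Icc 1 n, ∑ p ∈ j.divisorsAntidiagonal, p.2 := by
        refine Finset.sum_congr rfl fun j _ => ?_
        exact (Nat.sum_divisorsAntidiagonal' (fun _ y => y)).symm
    _ = ∑ p ∈ (Finset.Icc 1 n).biUnion Nat.divisorsAntidiagonal, p.2 :=
        (Finset.sum_biUnion hdisj).symm
    _ = ∑ q ∈ Finset.Icc 1 n, ∑ d ∈ Finset.Icc 1 (n / q), d := by
        rw [Finset.sum_sigma' (Finset.Icc 1 n) (fun q => Finset.Icc 1 (n / q))
          (fun _ d => d)]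
        refine Finset.sum_nbij' (fun p => ⟨p.1, p.2⟩) (fun p => (p.1, p.2)) ?_ ?_
          (fun _ _ => rfl) (fun _ _ => rfl) (fun _ _ => rfl)
        · intro p hp
          simp only [Finset.mem_biUnion, Nat.mem_divisorsAntidiagonal,
            Finset.mem_Icc] at hp
          obtain ⟨j, hj, hpj, hj0⟩ := hp
          subst hpj
          have h1 : 1 ≤ p.1 := by
            rcases Nat.eq_zero_or_pos p.1 with h | h
            · rw [h] at hj0; simp at hj0
            · exact h
          have h2 : 1 ≤ p.2 := by
            rcases Nat.eq_zero_or_pos p.2 with h | h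
            · rw [h] at hj0; simp at hj0
            · exact h
          have h3 : p.1 ≤ p.1 * p.2 := Nat.le_mul_of_pos_right _ h2
          simp only [Finset.mem_sigma, Finset.mem_Icc]
          refine ⟨⟨h1, le_trans h3 hj.2⟩, h2, ?_⟩
          rw [Nat.le_div_iff_mul_le h1]
          rw [mul_comm]; exact hj.2
        · intro p hp
          simp only [Finset.mem_sigma, Finset.mem_Icc] at hp
          obtain ⟨⟨h1, h2⟩, h3, h4⟩ := hp
          simp only [Finset.mem_biUnion, Nat.mem_divisorsAntidiagonal, Finset.mem_Icc]
          refine ⟨p.1 * p.2, ⟨?_, ?_⟩, rfl, ?_⟩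
          · exact Nat.one_le_iff_ne_zero.2 (Nat.mul_ne_zero (by omega) (by omega))
          · rw [Nat.le_div_iff_mul_le h1] at h4
            calc p.1 * p.2 = p.2 * p.1 := mul_comm _ _
              _ ≤ n := h4
          · exact Nat.mul_ne_zero (by omega) (by omega)

lemma gauss_sum (m : ℕ) : ∑ d ∈ Finset.Icc 1 m, (d : ℝ) = m * (m + 1) / 2 := by
  induction m with
  | zero => simp
  | succ k ih =>
      rw [Finset.sum_Icc_succ_top (by omega), ih]
      push_cast; ring

lemma harmonic_bound (n : ℕ) : ∑ q ∈ Finset.Icc 1 n, 1 / (q : ℝ) ≤ 1 + Real.log n := by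
  have h1 : ((harmonic n : ℚ) : ℝ) = ∑ q ∈ Finset.Icc 1 n, 1 / (q : ℝ) := by
    rw [harmonic_eq_sum_Icc]; push_cast; simp [one_div]
  rw [← h1]; exact harmonic_le_one_add_log n

lemma basel_partial (n : ℕ) (hn : 1 ≤ n) :
    |(∑ q ∈ Finset.Icc 1 n, 1 / (q : ℝ) ^ 2) - π ^ 2 / 6| ≤ 1 / (n : ℝ) := by
  have h0 : (0 : ℝ) ≤ 1 / (n : ℝ) := by positivity
  have hf0 : (1 : ℝ) / (0 : ℕ) ^ 2 = 0 := by norm_num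
  have hIcc : ∀ N : ℕ, ∑ q ∈ Finset.range (N + 1), 1 / (q : ℝ) ^ 2
      = ∑ q ∈ Finset.Icc 1 N, 1 / (q : ℝ) ^ 2 := by
    intro N
    rw [eq_comm]
    apply Finset.sum_subset
    · intro x hx
      simp only [Finset.mem_Icc] at hx
      simp only [Finset.mem_range]
      omega
    · intro x hx hnx
      simp only [Finset.mem_range] at hx
      simp only [Finset.mem_Icc] at hnx
      have : x = 0 := by omega
      subst this; exact hf0
  have hle : (∑ q ∈ Finset.Icc 1 n, 1 / (q : ℝ) ^ 2) ≤ π ^ 2 / 6 := by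
    refine sum_le_hasSum _ (fun i _ => by positivity) hasSum_zeta_two
  have hge : π ^ 2 / 6 ≤ (∑ q ∈ Finset.Icc 1 n, 1 / (q : ℝ) ^ 2) + 1 / n := by
    have htend : Filter.Tendsto (fun N : ℕ => ∑ q ∈ Finset.Icc 1 N, 1 / (q : ℝ) ^ 2)
        Filter.atTop (nhds (π ^ 2 / 6)) := by
      have := hasSum_zeta_two.tendsto_sum_nat
      have h2 := this.comp (Filter.tendsto_add_atTop_nat 1)
      simpa only [Function.comp_def, hIcc] using h2
    refine le_of_tendsto htend ?_
    filter_upwards [Filter.eventually_ge_atTop n] with N hN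
    have hsplit : ∑ q ∈ Finset.Icc 1 N, 1 / (q : ℝ) ^ 2
        = (∑ q ∈ Finset.Icc 1 n, 1 / (q : ℝ) ^ 2) + ∑ q ∈ Finset.Ioc n N, 1 / (q : ℝ) ^ 2 := by
      rw [← Finset.sum_union ?hd]
      case hd =>
        rw [Finset.disjoint_left]
        intro a ha hb
        simp only [Finset.mem_Icc] at ha
        simp only [Finset.mem_Ioc] at hb
        omega
      congr 1
      ext a
      simp only [Finset.mem_Icc, Finset.mem_union, Finset.mem_Ioc]
      omega
    rw [hsplit]
    have htail : ∑ q ∈ Finset.Ioc n N, 1 / (q : ℝ) ^ 2 ≤ 1 / (n : ℝ) := by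
      have h := sum_Ioc_inv_sq_le_sub (α := ℝ) (Nat.one_le_iff_ne_zero.1 hn) hN
      have hN0 : (0 : ℝ) ≤ (N : ℝ)⁻¹ := by positivity
      calc ∑ q ∈ Finset.Ioc n N, 1 / (q : ℝ) ^ 2
          = ∑ q ∈ Finset.Ioc n N, ((q : ℝ) ^ 2)⁻¹ := by simp [one_div]
        _ ≤ (n : ℝ)⁻¹ - (N : ℝ)⁻¹ := h
        _ ≤ 1 / (n : ℝ) := by rw [one_div]; linarith
    linarith
  refine abs_le.2 ⟨by linarith, by linarith⟩

lemma term_bound (n q : ℕ) (hq : 1 ≤ q) (hqn : q ≤ n) :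
    |((n / q : ℕ) : ℝ) * (((n / q : ℕ) : ℝ) + 1) / 2 - ((n : ℝ) / q) ^ 2 / 2|
      ≤ (n : ℝ) / q := by
  set r : ℝ := ((n / q : ℕ) : ℝ) with hr
  set x : ℝ := (n : ℝ) / q with hx
  have hq0 : (0 : ℝ) < q := by exact_mod_cast hq
  have hrx : r ≤ x := Nat.cast_div_le
  have hxr : x < r + 1 := by
    have h : n < (n / q + 1) * q := (Nat.div_lt_iff_lt_mul hq).1 (Nat.lt_succ_self _)
    have h2 : (n : ℝ) < (r + 1) * q := by rw [hr]; exact_mod_cast h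
    rw [hx, div_lt_iff₀ hq0]; exact h2
  have hr0 : (0 : ℝ) ≤ r := Nat.cast_nonneg _
  have hx1 : (1 : ℝ) ≤ x := (one_le_div hq0).2 (by exact_mod_cast hqn)
  rw [abs_le]
  constructor <;> nlinarith

/-- (Bachmann) `∑_{j=1}^n σ(j) = (π²/12) n² + O(n log n)` as `n → ∞`. -/
theorem bachmann_average_sigma :
    (fun n : ℕ =>
        (∑ j ∈ Finset.Icc 1 n, ∑ d ∈ j.divisors, (d : ℝ)) - π ^ 2 / 12 * n ^ 2)
      =O[Filter.atTop] fun n : ℕ => (n : ℝ) * log n := by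
  rw [Asymptotics.isBigO_iff]
  refine ⟨10, ?_⟩
  filter_upwards [Filter.eventually_ge_atTop 2] with n hn
  have hn1 : 1 ≤ n := le_trans one_le_two hn
  have hnR : (1 : ℝ) ≤ n := by exact_mod_cast hn1
  have hlog : Real.log 2 ≤ Real.log n :=
    Real.log_le_log (by norm_num) (by exact_mod_cast hn)
  have hlog2 : (1 / 2 : ℝ) < Real.log 2 := by
    have := Real.log_two_gt_d9; linarith
  have hlogpos : (1 / 2 : ℝ) < Real.log n := lt_of_lt_of_le hlog2 hlog
  have key : (∑ j ∈ Finset.Icc 1 n, ∑ d ∈ j.divisors, (d : ℝ))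
      = ∑ q ∈ Finset.Icc 1 n,
          (((n / q : ℕ) : ℝ) * (((n / q : ℕ) : ℝ) + 1) / 2) := by
    calc (∑ j ∈ Finset.Icc 1 n, ∑ d ∈ j.divisors, (d : ℝ))
        = ((∑ j ∈ Finset.Icc 1 n, ∑ d ∈ j.divisors, d : ℕ) : ℝ) := by push_cast; rfl
      _ = ((∑ q ∈ Finset.Icc 1 n, ∑ d ∈ Finset.Icc 1 (n / q), d : ℕ) : ℝ) := by
          rw [swap_sum_aux]
      _ = ∑ q ∈ Finset.Icc 1 n, ∑ d ∈ Finset.Icc 1 (n / q), (d : ℝ) := by push_cast; rfl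
      _ = _ := Finset.sum_congr rfl (fun q _ => gauss_sum _)
  rw [key]
  have h1 : ∑ q ∈ Finset.Icc 1 n, ((n : ℝ) / q) ^ 2 / 2
      = (n : ℝ) ^ 2 / 2 * ∑ q ∈ Finset.Icc 1 n, 1 / (q : ℝ) ^ 2 := by
    rw [Finset.mul_sum]
    exact Finset.sum_congr rfl (fun q _ => by rw [div_pow]; ring)
  have split : (∑ q ∈ Finset.Icc 1 n,
        (((n / q : ℕ) : ℝ) * (((n / q : ℕ) : ℝ) + 1) / 2)) - π ^ 2 / 12 * n ^ 2
      = (∑ q ∈ Finset.Icc 1 n,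
          ((((n / q : ℕ) : ℝ) * (((n / q : ℕ) : ℝ) + 1) / 2) - ((n : ℝ) / q) ^ 2 / 2))
        + (n : ℝ) ^ 2 / 2 * ((∑ q ∈ Finset.Icc 1 n, 1 / (q : ℝ) ^ 2) - π ^ 2 / 6) := by
    rw [Finset.sum_sub_distrib, mul_sub, h1]
    ring
  rw [split]
  have ha : |∑ q ∈ Finset.Icc 1 n,
      ((((n / q : ℕ) : ℝ) * (((n / q : ℕ) : ℝ) + 1) / 2) - ((n : ℝ) / q) ^ 2 / 2)|
      ≤ (n : ℝ) * (1 + Real.log n) := by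
    calc |∑ q ∈ Finset.Icc 1 n,
        ((((n / q : ℕ) : ℝ) * (((n / q : ℕ) : ℝ) + 1) / 2) - ((n : ℝ) / q) ^ 2 / 2)|
        ≤ ∑ q ∈ Finset.Icc 1 n,
          |(((n / q : ℕ) : ℝ) * (((n / q : ℕ) : ℝ) + 1) / 2) - ((n : ℝ) / q) ^ 2 / 2| :=
          Finset.abs_sum_le_sum_abs _ _
      _ ≤ ∑ q ∈ Finset.Icc 1 n, (n : ℝ) / q := by
          refine Finset.sum_le_sum (fun q hq => ?_)
          rw [Finset.mem_Icc] at hq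
          exact term_bound n q hq.1 hq.2
      _ = (n : ℝ) * ∑ q ∈ Finset.Icc 1 n, 1 / (q : ℝ) := by
          rw [Finset.mul_sum]
          exact Finset.sum_congr rfl (fun q _ => by ring)
      _ ≤ (n : ℝ) * (1 + Real.log n) := by
          refine mul_le_mul_of_nonneg_left (harmonic_bound n) (by positivity)
  have hb : |(n : ℝ) ^ 2 / 2 * ((∑ q ∈ Finset.Icc 1 n, 1 / (q : ℝ) ^ 2) - π ^ 2 / 6)|
      ≤ (n : ℝ) / 2 := by
    rw [abs_mul, abs_of_nonneg (by positivity : (0:ℝ) ≤ (n : ℝ) ^ 2 / 2)]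
    have := basel_partial n hn1
    calc (n : ℝ) ^ 2 / 2 * |(∑ q ∈ Finset.Icc 1 n, 1 / (q : ℝ) ^ 2) - π ^ 2 / 6|
        ≤ (n : ℝ) ^ 2 / 2 * (1 / n) :=
          mul_le_mul_of_nonneg_left this (by positivity)
      _ = (n : ℝ) / 2 := by
          field_simp
  have hnorm : ‖(n : ℝ) * Real.log n‖ = (n : ℝ) * Real.log n := by
    rw [Real.norm_eq_abs, abs_of_nonneg]
    positivity
  rw [Real.norm_eq_abs, hnorm]
  have htri := abs_add_le
    (∑ q ∈ Finset.Icc 1 n,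
      ((((n / q : ℕ) : ℝ) * (((n / q : ℕ) : ℝ) + 1) / 2) - ((n : ℝ) / q) ^ 2 / 2))
    ((n : ℝ) ^ 2 / 2 * ((∑ q ∈ Finset.Icc 1 n, 1 / (q : ℝ) ^ 2) - π ^ 2 / 6))
  have hnn : (0 : ℝ) ≤ (n : ℝ) := by positivity
  nlinarith [mul_le_mul_of_nonneg_left hlogpos.le hnn]
end
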